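/- arXiv:1912.12895 — 7 statements merged into one kernel-verified Lean document; each statement's English description precedes it below -/
import Mathlib

section
/- Let X be a topological space, S : X → X an open map, and A ⊆ X. Then interior (⋂ n, S^[n] ⁻¹' A) = Box_S(A); in particular the interior of ⋂ n, S^[n] ⁻¹' A is S-invariant. (On open dynamical systems, weak and strong henceforth coincide.) -/
def Box {X : Type*} [TopologicalSpace X] (S : X → X) (A : Set X) : Set X :=
  ⋃₀ {U : Set X | IsOpen U ∧ S '' U ⊆ U ∧ U ⊆ A}

theorem weak_eq_strong_henceforth_of_openMap
    {X : Type*} [TopologicalSpace X] {S : X → X} (hS : IsOpenMap S) (A : Set X) :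
    interior (⋂ n : ℕ, S^[n] ⁻¹' A) = Box S A ∧
    S '' interior (⋂ n : ℕ, S^[n] ⁻¹' A) ⊆ interior (⋂ n : ℕ, S^[n] ⁻¹' A) := by
  set I := ⋂ n : ℕ, S^[n] ⁻¹' A with hI
  have hsub : S '' interior I ⊆ I := by
    rintro _ ⟨x, hx, rfl⟩
    have hxI : x ∈ I := interior_subset hx
    simp only [hI, Set.mem_iInter, Set.mem_preimage] at hxI ⊢
    intro n
    have := hxI (n + 1)
    rwa [Function.iterate_succ_apply] at this
  have hinv : S '' interior I ⊆ interior I :=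
    interior_maximal hsub (hS _ isOpen_interior)
  refine ⟨subset_antisymm ?_ ?_, hinv⟩
  · exact fun x hx => ⟨interior I, ⟨isOpen_interior, hinv,
      fun y hy => by simpa using (interior_subset hy : y ∈ I) |> Set.mem_iInter.1 |> (· 0)⟩, hx⟩
  · rintro x ⟨U, ⟨hUo, hUinv, hUA⟩, hxU⟩
    have hUI : U ⊆ I := by
      have key : ∀ n, ∀ y ∈ U, S^[n] y ∈ A := by
        intro n
        induction n with
        | zero => exact fun y hy => hUA hy
        | succ n ih =>
          intro y hy
          rw [Function.iterate_succ_apply]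
          exact ih _ (hUinv ⟨y, hy, rfl⟩)
      intro y hy
      simp only [hI, Set.mem_iInter, Set.mem_preimage]
      exact fun n => key n y hy
    exact interior_maximal hUI hUo hxU
end

section
/- Let (W, ≼) be a partial order with the upper-set (Alexandrov) topology, and let S : W → W be monotone. For A an upper set and w ∈ W, the following are equivalent: (a) w ∈ Box_S(A) (w belongs to some upper S-invariant set contained in A); (b) w ∈ interior (⋂ n, S^[n] ⁻¹' A); (c) for all n ∈ ℕ, S^[n] w ∈ A. -/
def upTop (W : Type*) [Preorder W] : TopologicalSpace W where
  IsOpen U := IsUpperSet U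
  isOpen_univ := isUpperSet_univ
  isOpen_inter := fun _ _ h1 h2 => h1.inter h2
  isOpen_sUnion := fun _ h => isUpperSet_sUnion h

theorem box_tfae_on_posets
    {W : Type*} [PartialOrder W] {S : W → W} (hS : Monotone S)
    {A : Set W} (hA : IsUpperSet A) (w : W) :
    letI : TopologicalSpace W := upTop W
    ((w ∈ Box S A ↔ ∀ n : ℕ, S^[n] w ∈ A) ∧
     (w ∈ interior (⋂ n : ℕ, S^[n] ⁻¹' A) ↔ ∀ n : ℕ, S^[n] w ∈ A)) := by
  letI : TopologicalSpace W := upTop W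
  set B : Set W := ⋂ n : ℕ, S^[n] ⁻¹' A with hB
  have hBupper : IsUpperSet B := by
    intro x y hxy hx
    simp only [hB, Set.mem_iInter, Set.mem_preimage] at hx ⊢
    intro n
    exact hA ((hS.iterate n) hxy) (hx n)
  have hBopen : IsOpen B := hBupper
  have hBinv : S '' B ⊆ B := by
    rintro _ ⟨x, hx, rfl⟩
    simp only [hB, Set.mem_iInter, Set.mem_preimage] at hx ⊢
    intro n
    have := hx (n + 1)
    rwa [Function.iterate_succ_apply] at this
  have hBA : B ⊆ A := fun x hx => by
    have := Set.mem_iInter.1 hx 0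
    simpa using this
  have hmem : ∀ x, x ∈ B ↔ ∀ n : ℕ, S^[n] x ∈ A := by
    intro x; simp [hB]
  constructor
  · constructor
    · rintro ⟨U, ⟨hUo, hUinv, hUA⟩, hwU⟩ n
      induction n generalizing w with
      | zero => exact hUA hwU
      | succ n ih =>
        rw [Function.iterate_succ_apply]
        exact ih (S w) (hUinv ⟨w, hwU, rfl⟩)
    · intro h
      exact ⟨B, ⟨hBopen, hBinv, hBA⟩, (hmem w).2 h⟩
  · rw [hBopen.interior_eq]
    exact hmem w
end

section
/- Let S : ℝ → ℝ be defined by S(x) = 0 for x ≤ 0 and S(x) = 2x for x > 0, and let P = (-∞, 1). Then ⋂ n ≥ 0, S^[n] ⁻¹' P = (-∞, 0], its interior is (-∞, 0), and S ⁻¹' (-∞, 0) = ∅. In particular, interior (⋂ n, S^[n] ⁻¹' P) is not contained in S ⁻¹' (interior (⋂ n, S^[n] ⁻¹' P)). (This witnesses failure of the validity of □p → ○□p for weak henceforth.) -/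
noncomputable def S10 : ℝ → ℝ := fun x => if x ≤ 0 then 0 else 2 * x

/-! The orbit of a point `x ≤ 0` stays at `0` after one step, while that of `x > 0` is
`2ⁿ x`, which eventually leaves `(-∞, 1)`. So the points whose whole orbit stays in `P`
form `(-∞, 0]`, with interior `(-∞, 0)`; but `S` is nonnegative, so no point is mapped
into that interior. -/

open Set

lemma S10_of_nonpos {x : ℝ} (hx : x ≤ 0) : S10 x = 0 := if_pos hx

lemma S10_of_pos {x : ℝ} (hx : 0 < x) : S10 x = 2 * x := if_neg hx.not_ge

lemma S10_nonneg (x : ℝ) : 0 ≤ S10 x := by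
  rcases le_or_gt x 0 with hx | hx
  · rw [S10_of_nonpos hx]
  · rw [S10_of_pos hx]; positivity

lemma mapsTo_S10_Iic_zero : MapsTo S10 (Iic 0) (Iic 0) := fun _ hx =>
  (S10_of_nonpos hx).le

lemma iterate_S10_of_pos {x : ℝ} (hx : 0 < x) (n : ℕ) : S10^[n] x = 2 ^ n * x := by
  induction n with
  | zero => simp
  | succ n ih =>
    rw [Function.iterate_succ_apply', ih, S10_of_pos (by positivity), pow_succ]
    ring

lemma iInter_preimage_iterate_S10_Iio_one :
    (⋂ n : ℕ, S10^[n] ⁻¹' Iio (1 : ℝ)) = Iic 0 := by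
  ext x
  simp only [mem_iInter, mem_preimage, mem_Iio, mem_Iic]
  constructor
  · intro h
    by_contra! hx
    obtain ⟨n, hn⟩ := pow_unbounded_of_one_lt x⁻¹ (one_lt_two : (1 : ℝ) < 2)
    have h_escape : 1 < S10^[n] x := by
      rw [iterate_S10_of_pos hx]
      exact (inv_lt_iff_one_lt_mul₀ hx).mp hn
    exact (h n).not_gt h_escape
  · intro hx n
    exact (mapsTo_S10_Iic_zero.iterate n hx).trans_lt one_pos

lemma preimage_S10_Iio_zero : S10 ⁻¹' Iio 0 = ∅ :=
  eq_empty_of_forall_notMem fun x hx => (S10_nonneg x).not_gt hx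

theorem weak_henceforth_next_failure :
    (⋂ n : ℕ, S10^[n] ⁻¹' Set.Iio (1 : ℝ)) = Set.Iic (0 : ℝ) ∧
    interior (⋂ n : ℕ, S10^[n] ⁻¹' Set.Iio (1 : ℝ)) = Set.Iio (0 : ℝ) ∧
    S10 ⁻¹' Set.Iio (0 : ℝ) = ∅ ∧
    ¬ interior (⋂ n : ℕ, S10^[n] ⁻¹' Set.Iio (1 : ℝ)) ⊆
        S10 ⁻¹' interior (⋂ n : ℕ, S10^[n] ⁻¹' Set.Iio (1 : ℝ)) := by
  have h_interior : interior (⋂ n : ℕ, S10^[n] ⁻¹' Iio (1 : ℝ)) = Iio 0 := by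
    rw [iInter_preimage_iterate_S10_Iio_one, interior_Iic]
  refine ⟨iInter_preimage_iterate_S10_Iio_one, h_interior, preimage_S10_Iio_zero, ?_⟩
  rw [h_interior, preimage_S10_Iio_zero, subset_empty_iff]
  exact nonempty_Iio.ne_empty
end

section
/- Let X be a topological space, S : X → X a function, and A ⊆ X an open set. If U ⊆ X is open, S-invariant, and U ⊆ interior ((X \ A) ∪ S ⁻¹' A), then U ∩ A is an open S-invariant subset of A; in particular U ∩ A ⊆ Box_S(A). (Soundness of the induction axiom □(φ→○φ) → (φ→□φ).) -/
theorem induction_axiom_sound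
    {X : Type*} [TopologicalSpace X] (S : X → X) {A : Set X} (hA : IsOpen A)
    {U : Set X} (hU : IsOpen U) (hinv : S '' U ⊆ U)
    (hsub : U ⊆ interior ((Set.univ \ A) ∪ S ⁻¹' A)) :
    (IsOpen (U ∩ A) ∧ S '' (U ∩ A) ⊆ U ∩ A ∧ U ∩ A ⊆ A) ∧
    U ∩ A ⊆ Box S A := by
  have hinv' : S '' (U ∩ A) ⊆ U ∩ A := by
    rintro y ⟨x, ⟨hxU, hxA⟩, rfl⟩
    have h1 : S x ∈ U := hinv ⟨x, hxU, rfl⟩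
    have h2 := interior_subset (hsub hxU)
    rcases h2 with h | h
    · exact absurd hxA h.2
    · exact ⟨h1, h⟩
  refine ⟨⟨hU.inter hA, hinv', Set.inter_subset_right⟩, ?_⟩
  intro x hx
  exact ⟨U ∩ A, ⟨hU.inter hA, hinv', Set.inter_subset_right⟩, hx⟩
end

section
/- Let X be a locally connected topological space, S : X → X continuous, and let A, B ⊆ X be disjoint open sets. Suppose U is open, S-invariant, U ⊆ A ∪ B, and x ∈ U. Then either there exists n ∈ ℕ with S^[n] x ∈ A, or there exists an open S-invariant set V with x ∈ V and V ⊆ B. (Key step in the validity of the axiom CD⁻: □(¬φ ∨ φ) → □¬φ ∨ ◇φ on locally connected spaces.) -/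
theorem cd_minus_key_step
    {X : Type*} [TopologicalSpace X] [LocallyConnectedSpace X]
    {S : X → X} (hS : Continuous S)
    {A B : Set X} (hA : IsOpen A) (hB : IsOpen B) (hdisj : Disjoint A B)
    {U : Set X} (hU : IsOpen U) (hinv : S '' U ⊆ U) (hUAB : U ⊆ A ∪ B)
    {x : X} (hx : x ∈ U) :
    (∃ n : ℕ, S^[n] x ∈ A) ∨
    (∃ V : Set X, IsOpen V ∧ S '' V ⊆ V ∧ x ∈ V ∧ V ⊆ B) := by
  by_cases hA' : ∃ n : ℕ, S^[n] x ∈ A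
  · exact Or.inl hA'
  push_neg at hA'
  -- every iterate stays in U
  have hUn : ∀ n, S^[n] x ∈ U := by
    intro n
    induction n with
    | zero => exact hx
    | succ n ih => rw [Function.iterate_succ_apply']; exact hinv ⟨_, ih, rfl⟩
  have hW : ∀ n, S^[n] x ∈ U ∩ B := fun n =>
    ⟨hUn n, (hUAB (hUn n)).resolve_left (hA' n)⟩
  set W := U ∩ B with hWdef
  have hWopen : IsOpen W := hU.inter hB
  set C : ℕ → Set X := fun n => connectedComponentIn W (S^[n] x) with hC
  have hCsub : ∀ n, C n ⊆ W := fun n => connectedComponentIn_subset W _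
  have hCmem : ∀ n, S^[n] x ∈ C n := fun n => mem_connectedComponentIn (hW n)
  have hCconn : ∀ n, IsPreconnected (C n) := fun n =>
    (isConnected_connectedComponentIn_iff.mpr (hW n)).isPreconnected
  have hstep : ∀ n, S '' C n ⊆ C (n + 1) := by
    intro n
    have himgU : S '' C n ⊆ U := fun y ⟨z, hz, hzy⟩ =>
      hzy ▸ hinv ⟨z, (hCsub n hz).1, rfl⟩
    have hconn : IsPreconnected (S '' C n) :=
      (hCconn n).image S hS.continuousOn
    have hmem : S^[n+1] x ∈ S '' C n := by
      rw [Function.iterate_succ_apply']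
      exact ⟨_, hCmem n, rfl⟩
    have hBsub : S '' C n ⊆ B := by
      rcases hconn.subset_or_subset hA hB hdisj (fun y hy => hUAB (himgU hy)) with h | h
      · exact absurd (h hmem) (fun hAmem => hdisj.ne_of_mem hAmem (hW (n+1)).2 rfl)
      · exact h
    exact hconn.subset_connectedComponentIn hmem (fun y hy => ⟨himgU hy, hBsub hy⟩)
  refine Or.inr ⟨⋃ n, C n, isOpen_iUnion fun n => hWopen.connectedComponentIn, ?_, ?_, ?_⟩
  · rintro y ⟨z, hz, rfl⟩
    rcases Set.mem_iUnion.mp hz with ⟨n, hn⟩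
    exact Set.mem_iUnion.mpr ⟨n + 1, hstep n ⟨z, hn, rfl⟩⟩
  · exact Set.mem_iUnion.mpr ⟨0, hCmem 0⟩
  · exact Set.iUnion_subset fun n y hy => (hCsub n hy).2
end

section
/- Let D = ℚ ∩ ⋃ n : ℕ, (n - 1/(n + π), n + 1/(n + π)) viewed as a subset of the topological space ℚ. Then D is both open and closed in ℚ. Moreover, with S : ℚ → ℚ given by S(x) = x + 1: (a) S^[n] 0 ∈ D for all n ∈ ℕ; (b) for every rational x with 0 < x < 1/2 and every natural number n > 1/x, S^[n] x ∉ D. -/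
def D17 : Set ℚ :=
  {q : ℚ | ∃ n : ℕ, (n : ℝ) - 1 / (n + Real.pi) < (q : ℝ) ∧
    (q : ℝ) < (n : ℝ) + 1 / (n + Real.pi)}

/-!
The endpoints `n ± 1/(n+π)` are irrational, so no rational point distinguishes the open intervals
from the closed ones: on `ℚ` the union of the open intervals equals the locally finite union of the
closed intervals, and is therefore clopen. The orbit of `0` visits the centres `n`, whereas `x + n`
with `0 < x < 1/2` can only lie in the `n`-th interval, whose radius `1/(n+π) < 1/n < x` is too small.
-/

open Set

theorem Rat.preimage_cast_Ioo_eq_preimage_cast_Icc {a b : ℝ} (ha : Irrational a)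
    (hb : Irrational b) : ((↑) : ℚ → ℝ) ⁻¹' Ioo a b = (↑) ⁻¹' Icc a b := by
  ext q
  simp only [mem_preimage, mem_Ioo, mem_Icc]
  refine ⟨fun h => ⟨h.1.le, h.2.le⟩, fun h => ⟨h.1.lt_of_ne ?_, h.2.lt_of_ne ?_⟩⟩
  · exact ha.ne_rat q
  · exact (hb.ne_rat q).symm

theorem Rat.isClopen_preimage_cast_iUnion_Ioo {ι : Type*} {a b : ι → ℝ}
    (ha : ∀ i, Irrational (a i)) (hb : ∀ i, Irrational (b i))
    (hlf : LocallyFinite fun i => Icc (a i) (b i)) :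
    IsClopen (((↑) : ℚ → ℝ) ⁻¹' ⋃ i, Ioo (a i) (b i)) := by
  refine ⟨?_, isOpen_iUnion (fun _ => isOpen_Ioo) |>.preimage Rat.continuous_coe_real⟩
  have h : ((↑) : ℚ → ℝ) ⁻¹' ⋃ i, Ioo (a i) (b i) = (↑) ⁻¹' ⋃ i, Icc (a i) (b i) := by
    simp only [preimage_iUnion, Rat.preimage_cast_Ioo_eq_preimage_cast_Icc (ha _) (hb _)]
  rw [h]
  exact (hlf.isClosed_iUnion fun _ => isClosed_Icc).preimage Rat.continuous_coe_real

theorem locallyFinite_Icc_natCast_sub_add {r : ℕ → ℝ} (hr : ∀ n, r n ≤ 1) :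
    LocallyFinite fun n : ℕ => Icc (n - r n) (n + r n) := by
  intro x
  refine ⟨Metric.ball x 1, Metric.ball_mem_nhds x one_pos, ?_⟩
  refine (finite_Iio (⌈x⌉₊ + 2)).subset ?_
  rintro n ⟨y, ⟨hny, -⟩, hyx⟩
  have hyx : y < x + 1 := by
    rw [Metric.mem_ball, Real.dist_eq] at hyx
    linarith [le_abs_self (y - x)]
  have hn : (n : ℝ) < (⌈x⌉₊ + 2 : ℕ) := by
    push_cast
    linarith [hr n, Nat.le_ceil x]
  exact Nat.cast_lt.mp hn

theorem natCast_add_pi_pos (n : ℕ) : 0 < (n : ℝ) + Real.pi := by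
  positivity

theorem one_div_natCast_add_pi_lt_one_third (n : ℕ) : 1 / ((n : ℝ) + Real.pi) < 1 / 3 :=
  one_div_lt_one_div_of_lt (by norm_num) (by linarith [Real.pi_gt_three, n.cast_nonneg (α := ℝ)])

theorem irrational_one_div_natCast_add_pi (n : ℕ) : Irrational (1 / ((n : ℝ) + Real.pi)) := by
  rw [one_div]
  exact (irrational_pi.natCast_add n).inv

theorem D17_eq_preimage_cast_iUnion_Ioo :
    D17 = ((↑) : ℚ → ℝ) ⁻¹' ⋃ n : ℕ, Ioo ((n : ℝ) - 1 / (n + Real.pi)) (n + 1 / (n + Real.pi)) := by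
  ext q
  simp [D17]

theorem isClopen_D17 : IsClopen D17 := by
  rw [D17_eq_preimage_cast_iUnion_Ioo]
  refine Rat.isClopen_preimage_cast_iUnion_Ioo (fun n => ?_) (fun n => ?_)
    (locallyFinite_Icc_natCast_sub_add fun n => ?_)
  · exact (irrational_one_div_natCast_add_pi n).natCast_sub n
  · exact (irrational_one_div_natCast_add_pi n).natCast_add n
  · linarith [one_div_natCast_add_pi_lt_one_third n]

theorem natCast_mem_D17 (n : ℕ) : (n : ℚ) ∈ D17 := by
  have : 0 < 1 / ((n : ℝ) + Real.pi) := one_div_pos.mpr (natCast_add_pi_pos n)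
  exact ⟨n, by push_cast; linarith, by push_cast; linarith⟩

theorem add_natCast_notMem_D17 {x : ℚ} (hx₀ : 0 < x) (hx : x < 1 / 2) {n : ℕ}
    (hn : 1 / x < n) : x + n ∉ D17 := by
  rintro ⟨m, hlo, hhi⟩
  push_cast at hlo hhi
  have hxR : (0 : ℝ) < x := by exact_mod_cast hx₀
  have hxR' : (x : ℝ) < 1 / 2 := by simpa using (Rat.cast_lt (K := ℝ)).mpr hx
  have hxn : (1 : ℝ) < n * x := by exact_mod_cast (div_lt_iff₀ hx₀).mp hn
  have hr := one_div_natCast_add_pi_lt_one_third m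
  obtain rfl : m = n := by
    have hmn : m < n + 1 := by exact_mod_cast (by linarith : (m : ℝ) < n + 1)
    have hnm : n < m + 1 := by exact_mod_cast (by linarith : (n : ℝ) < m + 1)
    omega
  have hxr : (x : ℝ) * (m + Real.pi) < 1 :=
    (lt_div_iff₀ (natCast_add_pi_pos m)).mp (by linarith)
  nlinarith [Real.pi_pos]

theorem clopen_set_cd_counterexample :
    IsOpen D17 ∧ IsClosed D17 ∧
    (∀ n : ℕ, (fun x : ℚ => x + 1)^[n] 0 ∈ D17) ∧
    (∀ x : ℚ, 0 < x → x < 1 / 2 → ∀ n : ℕ, (1 / x : ℚ) < (n : ℚ) →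
      (fun x : ℚ => x + 1)^[n] x ∉ D17) := by
  refine ⟨isClopen_D17.isOpen, isClopen_D17.isClosed, fun n => ?_, fun x hx₀ hx n hn => ?_⟩
  · simpa [add_right_iterate] using natCast_mem_D17 n
  · simpa [add_right_iterate] using add_natCast_notMem_D17 hx₀ hx hn
end

section
/- Let S : ℝ → ℝ be continuous, let x ∈ ℝ, and suppose: (1) there is an open set V with S x ∈ V and V ⊆ closure P for some set P ⊆ ℝ; and (2) there is an open neighbourhood U of x with S '' U ∩ P = ∅. Then there is an open neighbourhood U* of x such that S '' U* = {S x}. (Core step in the validity of the conditional excluded middle axiom CEM on the real line, via the intermediate value theorem.) -/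
theorem cem_core_step
    {S : ℝ → ℝ} (hS : Continuous S) (x : ℝ) (P : Set ℝ)
    (h1 : ∃ V : Set ℝ, IsOpen V ∧ S x ∈ V ∧ V ⊆ closure P)
    (h2 : ∃ U : Set ℝ, IsOpen U ∧ x ∈ U ∧ S '' U ∩ P = ∅) :
    ∃ Ustar : Set ℝ, IsOpen Ustar ∧ x ∈ Ustar ∧ S '' Ustar = {S x} := by
  obtain ⟨V, hVopen, hSxV, hVP⟩ := h1
  obtain ⟨U, hUopen, hxU, hUP⟩ := h2
  set W : Set ℝ := U ∩ S ⁻¹' V with hW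
  have hWopen : IsOpen W := hUopen.inter (hVopen.preimage hS)
  have hxW : x ∈ W := ⟨hxU, hSxV⟩
  set C : Set ℝ := connectedComponentIn W x with hC
  have hCopen : IsOpen C := hWopen.connectedComponentIn
  have hxC : x ∈ C := mem_connectedComponentIn hxW
  have hCW : C ⊆ W := connectedComponentIn_subset W x
  refine ⟨C, hCopen, hxC, ?_⟩
  apply Set.eq_singleton_iff_unique_mem.mpr
  refine ⟨⟨x, hxC, rfl⟩, ?_⟩
  rintro _ ⟨y, hyC, rfl⟩
  by_contra hne
  -- S '' C is preconnected, hence ord-connected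
  have hpre : IsPreconnected (S '' C) :=
    (isPreconnected_connectedComponentIn).image S (hS.continuousOn)
  have hord : Set.OrdConnected (S '' C) := hpre.ordConnected
  -- the open interval between S y and S x is nonempty and inside S '' C
  have hIcc : Set.Icc (min (S y) (S x)) (max (S y) (S x)) ⊆ S '' C := by
    rcases le_total (S y) (S x) with h | h
    · simpa [min_eq_left h, max_eq_right h] using
        hord.out ⟨y, hyC, rfl⟩ ⟨x, hxC, rfl⟩
    · simpa [min_eq_right h, max_eq_left h] using
        hord.out ⟨x, hxC, rfl⟩ ⟨y, hyC, rfl⟩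
  have hlt : min (S y) (S x) < max (S y) (S x) := min_lt_max.mpr hne
  obtain ⟨q, hq⟩ : (Set.Ioo (min (S y) (S x)) (max (S y) (S x))).Nonempty :=
    Set.nonempty_Ioo.mpr hlt
  have hIoosub : Set.Ioo (min (S y) (S x)) (max (S y) (S x)) ⊆ S '' C :=
    fun z hz => hIcc (Set.Ioo_subset_Icc_self hz)
  -- q ∈ closure P, and Ioo is an open neighbourhood of q, so it meets P
  have hqcl : q ∈ closure P := by
    have : q ∈ S '' C := hIoosub hq
    obtain ⟨c, hcC, hcq⟩ := this
    exact hVP (by rw [← hcq]; exact (hCW hcC).2)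
  obtain ⟨p, hpI, hpP⟩ :=
    (mem_closure_iff.mp hqcl) _ isOpen_Ioo hq
  have hpSU : p ∈ S '' U := by
    obtain ⟨c, hcC, hcp⟩ := hIoosub hpI
    exact ⟨c, (hCW hcC).1, hcp⟩
  exact Set.eq_empty_iff_forall_notMem.mp hUP p ⟨hpSU, hpP⟩
end
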